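/- Let R be a nonassociative ring with additive maps σ and δ satisfying σ(1)=1 and δ(1)=0. Assume that σ² is an automorphism of R and σ∘δ + δ∘σ = 0. If R is Noetherian (both left and right Noetherian), then the flipped generalized polynomial ring R[X;σ,δ]^fl is Noetherian. -/

import Mathlib

open Finset
open scoped Classical

section Defs

variable {R : Type*} {S : Type*}

/-- Iterated power: `pw x 0 = 1`, `pw x (n+1) = pw x n * x`. -/
def pw [One S] [Mul S] (x : S) : ℕ → S
  | 0 => 1
  | n + 1 => pw x n * x

/-- `x` is power-associative. -/
def PowAssoc [One S] [Mul S] (x : S) : Prop := ∀ m n : ℕ, pw x m * pw x n = pw x (m + n)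

variable [NonAssocRing R] [NonAssocRing S]

/-- Interpret a finitely supported coefficient family as a left polynomial `Σ f(cᵢ)·xⁱ`. -/
noncomputable def lpoly (f : R →+* S) (x : S) (c : ℕ →₀ R) : S :=
  c.sum fun i r => f r * pw x i

/-- Right polynomial `Σ xⁱ·f(cᵢ)`. -/
noncomputable def rpoly (f : R →+* S) (x : S) (c : ℕ →₀ R) : S :=
  c.sum fun i r => pw x i * f r

/-- Left degree (`⊥` plays the role of `-∞`), computed from a representation as a
left polynomial in `x` (unique when `{1,x,x²,…}` is a left basis). -/
noncomputable def degl (f : R →+* S) (x : S) (p : S) : WithBot ℕ :=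
  if h : ∃ c : ℕ →₀ R, lpoly f x c = p then (Classical.choose h).support.max else ⊥

/-- Left leading coefficient (`0` for the zero polynomial). -/
noncomputable def lcl (f : R →+* S) (x : S) (p : S) : R :=
  if h : ∃ c : ℕ →₀ R, lpoly f x c = p then
    (Classical.choose h) (WithBot.unbotD 0 (Classical.choose h).support.max) else 0

/-- Right degree. -/
noncomputable def degr (f : R →+* S) (x : S) (p : S) : WithBot ℕ :=
  if h : ∃ c : ℕ →₀ R, rpoly f x c = p then (Classical.choose h).support.max else ⊥

/-- Right leading coefficient. -/
noncomputable def lcr (f : R →+* S) (x : S) (p : S) : R :=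
  if h : ∃ c : ℕ →₀ R, rpoly f x c = p then
    (Classical.choose h) (WithBot.unbotD 0 (Classical.choose h).support.max) else 0

/-- `(S,x)` is a left generalized nonassociative Ore extension of `R`
(with the embedding `f : R →+* S`). -/
structure IsLeftGNOE (f : R →+* S) (x : S) : Prop where
  inj : Function.Injective f
  powAssoc : PowAssoc x
  basis : Function.Bijective (lpoly f x)
  closed : ∀ (m n : ℕ) (r s : R), ∃ c : ℕ →₀ R,
    lpoly f x c = (f r * pw x m) * (f s * pw x n) ∧ ∀ i, m + n < i → c i = 0

/-- `(S,x)` is a right generalized nonassociative Ore extension of `R`. -/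
structure IsRightGNOE (f : R →+* S) (x : S) : Prop where
  inj : Function.Injective f
  powAssoc : PowAssoc x
  basis : Function.Bijective (rpoly f x)
  closed : ∀ (m n : ℕ) (r s : R), ∃ c : ℕ →₀ R,
    rpoly f x c = (pw x m * f r) * (pw x n * f s) ∧ ∀ i, m + n < i → c i = 0

/-- Right ideal of a (nonassociative) ring. -/
def IsRightIdeal (T : Type*) [NonAssocRing T] (I : Set T) : Prop :=
  (0 : T) ∈ I ∧ (∀ a b, a ∈ I → b ∈ I → a + b ∈ I) ∧ (∀ a, a ∈ I → -a ∈ I) ∧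
    ∀ a t, a ∈ I → a * t ∈ I

/-- Left ideal of a (nonassociative) ring. -/
def IsLeftIdeal (T : Type*) [NonAssocRing T] (I : Set T) : Prop :=
  (0 : T) ∈ I ∧ (∀ a b, a ∈ I → b ∈ I → a + b ∈ I) ∧ (∀ a, a ∈ I → -a ∈ I) ∧
    ∀ a t, a ∈ I → t * a ∈ I

/-- The right ideal generated by a set. -/
def rIdealGen (T : Type*) [NonAssocRing T] (G : Set T) : Set T :=
  ⋂₀ {I : Set T | IsRightIdeal T I ∧ G ⊆ I}

/-- The left ideal generated by a set. -/
def lIdealGen (T : Type*) [NonAssocRing T] (G : Set T) : Set T :=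
  ⋂₀ {I : Set T | IsLeftIdeal T I ∧ G ⊆ I}

/-- Right Noetherian: every right ideal is finitely generated. -/
def RightNoeth (T : Type*) [NonAssocRing T] : Prop :=
  ∀ I : Set T, IsRightIdeal T I → ∃ G : Finset T, I = rIdealGen T ↑G

/-- Left Noetherian: every left ideal is finitely generated. -/
def LeftNoeth (T : Type*) [NonAssocRing T] : Prop :=
  ∀ I : Set T, IsLeftIdeal T I → ∃ G : Finset T, I = lIdealGen T ↑G

/-- `M` is a right `R`-submodule of `S` (via `f`). -/
def IsRightRSub (f : R →+* S) (M : Set S) : Prop :=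
  (0 : S) ∈ M ∧ (∀ a b, a ∈ M → b ∈ M → a + b ∈ M) ∧ (∀ a, a ∈ M → -a ∈ M) ∧
    ∀ a r, a ∈ M → a * f r ∈ M

/-- `M` is a left `R`-submodule of `S` (via `f`). -/
def IsLeftRSub (f : R →+* S) (M : Set S) : Prop :=
  (0 : S) ∈ M ∧ (∀ a b, a ∈ M → b ∈ M → a + b ∈ M) ∧ (∀ a, a ∈ M → -a ∈ M) ∧
    ∀ a r, a ∈ M → f r * a ∈ M

/-- The right `R`-submodule of `S` generated by a set. -/
def rSubGen (f : R →+* S) (G : Set S) : Set S :=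
  ⋂₀ {M : Set S | IsRightRSub f M ∧ G ⊆ M}

/-- `s` belongs to the right ideal of `S` generated by `p 0, …, p (n-1)` and admits a
left-degree-additive representation `s = Σⱼ (⋯((p_{iⱼ} s_{j1})s_{j2})⋯)s_{jm}` whose degree
bound `max_j (deg_l p_{iⱼ} + Σₖ deg_l s_{jk})` equals `deg_l s`. -/
def LDegAddMem (f : R →+* S) (x : S) {n : ℕ} (p : Fin n → S) (s : S) : Prop :=
  ∃ L : List (Fin n × List S),
    s = (L.map fun t => t.2.foldl (· * ·) (p t.1)).sum ∧
    degl f x s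
      = (L.map fun t => degl f x (p t.1) + (t.2.map (degl f x)).sum).foldr max ⊥

/-- `s` belongs to the left ideal of `S` generated by `p 0, …, p (n-1)` and admits a
right-degree-additive representation. -/
def RDegAddMem (f : R →+* S) (x : S) {n : ℕ} (p : Fin n → S) (s : S) : Prop :=
  ∃ L : List (Fin n × List S),
    s = (L.map fun t => t.2.foldl (fun b a => a * b) (p t.1)).sum ∧
    degr f x s
      = (L.map fun t => degr f x (p t.1) + (t.2.map (degr f x)).sum).foldr max ⊥

/-- The left Euclidean division algorithm for `(S,x)` over `R`. -/
def LeftEDA (f : R →+* S) (x : S) : Prop :=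
  ∀ (n : ℕ) (p : Fin n → S) (q : S), q ≠ 0 →
    (∀ i, degl f x (p i) ≤ degl f x q) →
    lcl f x q ∈ rIdealGen R (Set.range fun i => lcl f x (p i)) →
    ∃ s, LDegAddMem f x p s ∧ degl f x (q - s) < degl f x q

/-- The right Euclidean division algorithm for `(S,x)` over `R`. -/
def RightEDA (f : R →+* S) (x : S) : Prop :=
  ∀ (n : ℕ) (p : Fin n → S) (q : S), q ≠ 0 →
    (∀ i, degr f x (p i) ≤ degr f x q) →
    lcr f x q ∈ lIdealGen R (Set.range fun i => lcr f x (p i)) →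
    ∃ s, RDegAddMem f x p s ∧ degr f x (q - s) < degr f x q

/-- The maps `πᵢᵐ`: the sum of all `C(m,i)` compositions of `i` copies of `σ`
and `m - i` copies of `δ`. -/
def pimap (σ δ : R → R) : ℕ → ℕ → R → R
  | 0, 0 => id
  | _ + 1, 0 => fun _ => 0
  | 0, m + 1 => fun r => δ (pimap σ δ 0 m r)
  | i + 1, m + 1 => fun r => σ (pimap σ δ i m r) + δ (pimap σ δ (i + 1) m r)

/-- `(S,x)` realizes the generalized polynomial ring `R[X;σ,δ]`: `{1,x,x²,…}` is a left
`R`-basis and multiplication is given by `(rxᵐ)(sxⁿ) = Σᵢ (r πᵢᵐ(s)) x^{i+n}`. -/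
def IsGPolyRing (σ δ : R → R) (f : R →+* S) (x : S) : Prop :=
  Function.Injective f ∧ PowAssoc x ∧ Function.Bijective (lpoly f x) ∧
    ∀ (r s : R) (m n : ℕ),
      (f r * pw x m) * (f s * pw x n)
        = ∑ i ∈ Finset.range (m + 1), f (r * pimap σ δ i m s) * pw x (i + n)

/-- `(S,x)` realizes the flipped generalized polynomial ring `R[X;σ,δ]^fl`:
multiplication is given by `(rxᵐ)(sxⁿ) = Σᵢ τₙ(r, πᵢᵐ(s)) x^{i+n}`. -/
def IsFlipGPolyRing (σ δ : R → R) (f : R →+* S) (x : S) : Prop :=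
  Function.Injective f ∧ PowAssoc x ∧ Function.Bijective (lpoly f x) ∧
    ∀ (r s : R) (m n : ℕ),
      (f r * pw x m) * (f s * pw x n)
        = ∑ i ∈ Finset.range (m + 1),
            f (if Even n then r * pimap σ δ i m s else pimap σ δ i m s * r) * pw x (i + n)

end Defs

/-! ## Generic ideal machinery -/

section GIdl

variable {T : Type*} [NonAssocRing T]

def GIdl (mu : T → T → T) (I : Set T) : Prop :=
  (0 : T) ∈ I ∧ (∀ a b, a ∈ I → b ∈ I → a + b ∈ I) ∧ (∀ a, a ∈ I → -a ∈ I) ∧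
    ∀ a t, a ∈ I → mu a t ∈ I

def GGen (mu : T → T → T) (G : Set T) : Set T :=
  ⋂₀ {I : Set T | GIdl mu I ∧ G ⊆ I}

variable {mu : T → T → T}

lemma gidl_univ : GIdl mu (Set.univ : Set T) := by
  refine ⟨trivial, fun _ _ _ _ => trivial, fun _ _ => trivial, fun _ _ _ => trivial⟩

lemma gidl_gGen (G : Set T) : GIdl mu (GGen mu G) := by
  refine ⟨?_, ?_, ?_, ?_⟩
  · intro I hI; exact hI.1.1
  · intro a b ha hb I hI; exact hI.1.2.1 a b (ha I hI) (hb I hI)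
  · intro a ha I hI; exact hI.1.2.2.1 a (ha I hI)
  · intro a t ha I hI; exact hI.1.2.2.2 a t (ha I hI)

lemma subset_gGen (G : Set T) : G ⊆ GGen mu G := fun g hg I hI => hI.2 hg

lemma gGen_subset {G I : Set T} (hI : GIdl mu I) (hG : G ⊆ I) : GGen mu G ⊆ I :=
  Set.sInter_subset_of_mem ⟨hI, hG⟩

lemma finset_subset_chain {C : ℕ → Set T} (mono' : ∀ i j, i ≤ j → C i ⊆ C j)
    (G : Finset T) (hGU : ↑G ⊆ ⋃ k, C k) : ∃ K, ↑G ⊆ C K := by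
  classical
  induction G using Finset.induction with
  | empty => exact ⟨0, by simp⟩
  | insert g G' hnot ih =>
    have h1 : (↑G' : Set T) ⊆ ⋃ k, C k := fun a ha => hGU (by simp [ha])
    rcases ih h1 with ⟨K1, hK1⟩
    have hg : g ∈ ⋃ k, C k := hGU (by simp)
    rcases Set.mem_iUnion.1 hg with ⟨K2, hK2⟩
    refine ⟨max K1 K2, ?_⟩
    intro a ha
    rcases Finset.mem_insert.1 (by exact_mod_cast ha) with rfl | ha'
    · exact mono' K2 _ (le_max_right _ _) hK2
    · exact mono' K1 _ (le_max_left _ _) (hK1 (by exact_mod_cast ha'))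

/-- ACC from finite generation. -/
lemma gidl_acc (noeth : ∀ I : Set T, GIdl mu I → ∃ G : Finset T, I = GGen mu ↑G)
    (C : ℕ → Set T) (mono : ∀ k, C k ⊆ C (k + 1)) (hC : ∀ k, GIdl mu (C k)) :
    ∃ K, ∀ k, K ≤ k → C k = C K := by
  have mono' : ∀ i j, i ≤ j → C i ⊆ C j := by
    intro i j hij
    induction j with
    | zero => simp_all
    | succ j ih =>
      rcases Nat.lt_or_ge i (j+1) with h | h
      · exact fun a ha => mono j (ih (Nat.lt_succ_iff.mp h) ha)
      · have : i = j + 1 := le_antisymm hij h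
        subst this; exact fun a ha => ha
  set U : Set T := ⋃ k, C k with hU
  have hUI : GIdl mu U := by
    refine ⟨Set.mem_iUnion.2 ⟨0, (hC 0).1⟩, ?_, ?_, ?_⟩
    · intro a b ha hb
      rcases Set.mem_iUnion.1 ha with ⟨i, hi⟩
      rcases Set.mem_iUnion.1 hb with ⟨j, hj⟩
      exact Set.mem_iUnion.2 ⟨max i j, (hC _).2.1 a b
        (mono' i _ (le_max_left i j) hi) (mono' j _ (le_max_right i j) hj)⟩
    · intro a ha
      rcases Set.mem_iUnion.1 ha with ⟨i, hi⟩
      exact Set.mem_iUnion.2 ⟨i, (hC i).2.2.1 a hi⟩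
    · intro a t ha
      rcases Set.mem_iUnion.1 ha with ⟨i, hi⟩
      exact Set.mem_iUnion.2 ⟨i, (hC i).2.2.2 a t hi⟩
  rcases noeth U hUI with ⟨G, hG⟩
  have hGU : ↑G ⊆ U := hG ▸ subset_gGen _
  rcases finset_subset_chain (C := C) mono' G hGU with ⟨K, hK⟩
  refine ⟨K, fun k hk => le_antisymm ?_ (mono' K k hk)⟩
  intro a ha
  have haU : a ∈ U := Set.mem_iUnion.2 ⟨k, ha⟩
  have : U ⊆ C K := hG ▸ gGen_subset (hC K) hK
  exact this haU

/-- Preimage of a `mu`-ideal under a `mu`-compatible additive bijection-ish map. -/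
lemma gidl_preimage {φ : T → T} (hadd : ∀ a b, φ (a + b) = φ a + φ b)
    (hm : ∀ a t, φ (mu a t) = mu (φ a) (φ t)) {I : Set T} (hI : GIdl mu I) :
    GIdl mu (φ ⁻¹' I) := by
  have h0 : φ 0 = 0 := by
    have h := hadd 0 0
    rw [add_zero] at h
    exact (add_left_cancel (a := φ 0) (by rw [add_zero]; exact h)).symm
  have hneg : ∀ a, φ (-a) = - φ a := by
    intro a
    have h := hadd a (-a)
    rw [add_neg_cancel, h0] at h
    exact eq_neg_of_add_eq_zero_right h.symm
  refine ⟨?_, ?_, ?_, ?_⟩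
  · show φ 0 ∈ I; rw [h0]; exact hI.1
  · intro a b ha hb; show φ (a+b) ∈ I; rw [hadd]; exact hI.2.1 _ _ ha hb
  · intro a ha; show φ (-a) ∈ I; rw [hneg]; exact hI.2.2.1 _ ha
  · intro a t ha; show φ (mu a t) ∈ I; rw [hm]; exact hI.2.2.2 _ _ ha

end GIdl
/-! ## pimap and sigma lemmas -/

section Pimap

variable {R : Type*} [NonAssocRing R] (σ δ : R → R)
variable (hσadd : ∀ a b : R, σ (a + b) = σ a + σ b) (hδadd : ∀ a b : R, δ (a + b) = δ a + δ b)
variable (hσ1 : σ 1 = 1) (hδ1 : δ 1 = 0)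
variable (hσ2bij : Function.Bijective (σ ∘ σ))
variable (hσ2mul : ∀ a b : R, (σ ∘ σ) (a * b) = (σ ∘ σ) a * (σ ∘ σ) b)
variable (hanti : ∀ r : R, σ (δ r) + δ (σ r) = 0)

include hσadd in
lemma sig_zero : σ 0 = 0 := by
  have h := hσadd 0 0
  rw [add_zero] at h
  exact (add_left_cancel (a := σ 0) (by rw [add_zero]; exact h)).symm

include hδadd in
lemma del_zero : δ 0 = 0 := by
  have h := hδadd 0 0
  rw [add_zero] at h
  exact (add_left_cancel (a := δ 0) (by rw [add_zero]; exact h)).symm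

include hσadd hδadd in
lemma pimap_gt : ∀ m i : ℕ, m < i → ∀ r, pimap σ δ i m r = 0 := by
  intro m
  induction m with
  | zero =>
    intro i hi r
    match i, hi with
    | i + 1, _ => rfl
  | succ m ih =>
    intro i hi r
    match i, hi with
    | i + 1, hi =>
      show σ (pimap σ δ i m r) + δ (pimap σ δ (i+1) m r) = 0
      rw [ih i (by omega) r, ih (i+1) (by omega) r, sig_zero σ hσadd,
        del_zero δ hδadd, add_zero]

include hσadd hδadd in
lemma pimap_diag : ∀ n : ℕ, ∀ r, pimap σ δ n n r = σ^[n] r := by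
  intro n
  induction n with
  | zero => intro r; rfl
  | succ n ih =>
    intro r
    show σ (pimap σ δ n n r) + δ (pimap σ δ (n+1) n r) = σ^[n+1] r
    rw [ih, pimap_gt σ δ hσadd hδadd n (n+1) (by omega), del_zero δ hδadd, add_zero,
      Function.iterate_succ_apply']

include hσadd hδadd hσ1 hδ1 in
lemma pimap_one : ∀ m i : ℕ, pimap σ δ i m 1 = if i = m then 1 else 0 := by
  intro m
  induction m with
  | zero =>
    intro i
    match i with
    | 0 => simp [pimap]
    | i + 1 => simp [pimap]
  | succ m ih =>
    intro i
    cases i with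
    | zero =>
      show δ (pimap σ δ 0 m 1) = if 0 = m + 1 then 1 else 0
      rw [ih 0, if_neg (show ¬(0 = m + 1) by omega)]
      rcases Nat.eq_zero_or_pos m with rfl | hm
      · rw [if_pos rfl]; exact hδ1
      · rw [if_neg (by omega), del_zero δ hδadd]
    | succ i =>
      show σ (pimap σ δ i m 1) + δ (pimap σ δ (i+1) m 1) = if i + 1 = m + 1 then 1 else 0
      rw [ih i, ih (i+1)]
      by_cases h : i = m
      · subst h
        rw [if_pos rfl, if_pos rfl, if_neg (show ¬(i + 1 = i) by omega), hσ1,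
          del_zero δ hδadd, add_zero]
      · rw [if_neg h, if_neg (show ¬(i + 1 = m + 1) by omega), sig_zero σ hσadd, zero_add]
        by_cases h2 : i + 1 = m
        · rw [if_pos h2, hδ1]
        · rw [if_neg h2, del_zero δ hδadd]

include hσadd hδadd hanti in
lemma pimap_two (r : R) :
    pimap σ δ 0 2 r = δ (δ r) ∧ pimap σ δ 1 2 r = 0 ∧ pimap σ δ 2 2 r = σ (σ r) := by
  have h11 : pimap σ δ 1 1 r = σ r := by
    show σ (pimap σ δ 0 0 r) + δ (pimap σ δ 1 0 r) = σ r
    show σ r + δ 0 = σ r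
    rw [del_zero δ hδadd, add_zero]
  refine ⟨rfl, ?_, ?_⟩
  · show σ (pimap σ δ 0 1 r) + δ (pimap σ δ 1 1 r) = 0
    show σ (δ (pimap σ δ 0 0 r)) + δ (pimap σ δ 1 1 r) = 0
    rw [h11]
    exact hanti r
  · show σ (pimap σ δ 1 1 r) + δ (pimap σ δ 2 1 r) = σ (σ r)
    rw [h11, pimap_gt σ δ hσadd hδadd 1 2 (by omega), del_zero δ hδadd, add_zero]

include hσ2bij in
lemma sig_bij : Function.Bijective σ :=
  ⟨fun a b h => hσ2bij.1 (by simp [Function.comp, h]),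
   fun y => by
    rcases hσ2bij.2 y with ⟨a, ha⟩
    exact ⟨σ a, ha⟩⟩

include hσ2mul in
lemma s2it_mul : ∀ k (a b : R), (σ ∘ σ)^[k] (a * b) = (σ ∘ σ)^[k] a * (σ ∘ σ)^[k] b := by
  intro k
  induction k with
  | zero => intro a b; rfl
  | succ k ih =>
    intro a b
    rw [Function.iterate_succ_apply', Function.iterate_succ_apply',
      Function.iterate_succ_apply', ih, hσ2mul]

include hσadd in
lemma s2it_add : ∀ k (a b : R), (σ ∘ σ)^[k] (a + b) = (σ ∘ σ)^[k] a + (σ ∘ σ)^[k] b := by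
  intro k
  induction k with
  | zero => intro a b; rfl
  | succ k ih =>
    intro a b
    rw [Function.iterate_succ_apply', Function.iterate_succ_apply',
      Function.iterate_succ_apply', ih]
    show σ (σ _) = _
    rw [hσadd, hσadd]; rfl

include hσadd in
lemma s2it_zero (k : ℕ) : (σ ∘ σ)^[k] (0 : R) = 0 := by
  have h := s2it_add σ hσadd k 0 0
  rw [add_zero] at h
  exact (add_left_cancel (a := (σ ∘ σ)^[k] 0) (by rw [add_zero]; exact h)).symm

end Pimap
/-! ## Coefficient calculus -/

section CalcS

variable {R S : Type*} [NonAssocRing R] [NonAssocRing S] (f : R →+* S) (x : S)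

lemma max_lt_iff' (s : Finset ℕ) (m : ℕ) : s.max < (m : WithBot ℕ) ↔ ∀ a ∈ s, a < m := by
  constructor
  · intro h a ha
    have h2 := lt_of_le_of_lt (Finset.le_max ha) h
    rw [Nat.cast_withBot] at h2
    exact_mod_cast h2
  · intro h
    rcases hs : s.max with _ | k
    · exact WithBot.bot_lt_coe m
    · have := h k (Finset.mem_of_max hs)
      rw [Nat.cast_withBot, WithBot.some_eq_coe]
      exact_mod_cast this

lemma lpoly_add (c d : ℕ →₀ R) : lpoly f x (c + d) = lpoly f x c + lpoly f x d := by
  unfold lpoly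
  rw [Finsupp.sum_add_index']
  · intro i; rw [map_zero, zero_mul]
  · intro i r s; rw [map_add, add_mul]

lemma lpoly_single (i : ℕ) (r : R) : lpoly f x (Finsupp.single i r) = f r * pw x i := by
  unfold lpoly
  rw [Finsupp.sum_single_index]
  rw [map_zero, zero_mul]

noncomputable def EE (hb : Function.Bijective (lpoly f x)) : (ℕ →₀ R) ≃+ S :=
  { Equiv.ofBijective _ hb with map_add' := lpoly_add f x }

variable (hb : Function.Bijective (lpoly f x))

noncomputable def cf (q : S) : ℕ → R := fun k => (EE f x hb).symm q k

noncomputable def Deg (q : S) : WithBot ℕ := ((EE f x hb).symm q).support.max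

lemma EE_apply (c : ℕ →₀ R) : EE f x hb c = lpoly f x c := rfl

lemma decomp (q : S) :
    q = ∑ j ∈ ((EE f x hb).symm q).support, f (cf f x hb q j) * pw x j := by
  conv_lhs => rw [← (EE f x hb).apply_symm_apply q]
  rfl

lemma cf_sum {ι : Type*} (F : Finset ι) (g : ι → S) (k : ℕ) :
    cf f x hb (∑ t ∈ F, g t) k = ∑ t ∈ F, cf f x hb (g t) k := by
  unfold cf
  rw [map_sum]
  exact Finsupp.finset_sum_apply F _ k

lemma cf_monos {ι : Type*} (F : Finset ι) (a : ι → R) (d : ι → ℕ) (k : ℕ) :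
    cf f x hb (∑ t ∈ F, f (a t) * pw x (d t)) k = ∑ t ∈ F, if d t = k then a t else 0 := by
  have h : ∑ t ∈ F, f (a t) * pw x (d t) = EE f x hb (∑ t ∈ F, Finsupp.single (d t) (a t)) := by
    rw [map_sum]
    exact Finset.sum_congr rfl fun t _ => (lpoly_single f x (d t) (a t)).symm
  rw [h]
  unfold cf
  rw [AddEquiv.symm_apply_apply]
  rw [Finsupp.finset_sum_apply]
  exact Finset.sum_congr rfl fun t _ => Finsupp.single_apply

lemma cf_mono (r : R) (m k : ℕ) :
    cf f x hb (f r * pw x m) k = if m = k then r else 0 := by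
  have h : f r * pw x m = ∑ t ∈ ({0} : Finset ℕ), f r * pw x m := by simp
  rw [h, cf_monos f x hb ({0} : Finset ℕ) (fun _ => r) (fun _ => m) k]
  simp

lemma cf_add (q q' : S) (k : ℕ) : cf f x hb (q + q') k = cf f x hb q k + cf f x hb q' k := by
  unfold cf; rw [map_add]; rfl

lemma cf_sub (q q' : S) (k : ℕ) : cf f x hb (q - q') k = cf f x hb q k - cf f x hb q' k := by
  unfold cf; rw [map_sub]; rfl

lemma cf_zero (k : ℕ) : cf f x hb (0 : S) k = 0 := by
  unfold cf; rw [map_zero]; rfl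

lemma deg_le_iff (q : S) (n : ℕ) :
    Deg f x hb q ≤ (n : WithBot ℕ) ↔ ∀ k, n < k → cf f x hb q k = 0 := by
  unfold Deg
  rw [Finset.max_le_iff]
  constructor
  · intro h k hk
    by_contra hne
    have hmem : k ∈ ((EE f x hb).symm q).support := Finsupp.mem_support_iff.2 hne
    have h2 := h k hmem
    rw [Nat.cast_withBot] at h2
    have : k ≤ n := by exact_mod_cast h2
    omega
  · intro h a ha
    rw [Nat.cast_withBot]
    have : a ≤ n := by
      by_contra hlt
      exact (Finsupp.mem_support_iff.1 ha) (h a (by omega))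
    exact_mod_cast this

lemma deg_lt_iff (q : S) (n : ℕ) :
    Deg f x hb q < (n : WithBot ℕ) ↔ ∀ k, n ≤ k → cf f x hb q k = 0 := by
  unfold Deg
  rw [max_lt_iff']
  constructor
  · intro h k hk
    by_contra hne
    have := h k (Finsupp.mem_support_iff.2 hne)
    omega
  · intro h a ha
    by_contra hlt
    exact (Finsupp.mem_support_iff.1 ha) (h a (by omega))

lemma deg_zero : Deg f x hb (0 : S) = ⊥ := by
  unfold Deg
  rw [map_zero]
  rfl

lemma eq_zero_of_deg_lt_zero (q : S) (h : Deg f x hb q < ((0 : ℕ) : WithBot ℕ)) : q = 0 := by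
  have hc : (EE f x hb).symm q = 0 := by
    ext k
    have := (deg_lt_iff f x hb q 0).1 h k (by omega)
    exact this
  have := congrArg (EE f x hb) hc
  rw [(EE f x hb).apply_symm_apply, map_zero] at this
  exact this

lemma exists_deg_lt (q : S) : ∃ n : ℕ, Deg f x hb q < (n : WithBot ℕ) := by
  rcases hs : (((EE f x hb).symm q).support).max with _ | k
  · exact ⟨0, by unfold Deg; rw [hs]; exact WithBot.bot_lt_coe 0⟩
  · refine ⟨k + 1, ?_⟩
    unfold Deg
    rw [hs, Nat.cast_withBot, WithBot.some_eq_coe]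
    exact_mod_cast Nat.lt_succ_self k

lemma deg_bot_le (q : S) (n : ℕ) (h : Deg f x hb q = ⊥) : Deg f x hb q ≤ (n : WithBot ℕ) := by
  rw [h]; exact bot_le

end CalcS
/-! ## Products with monomials -/

section Prod

variable {R S : Type*} [NonAssocRing R] [NonAssocRing S] (f : R →+* S) (x : S)
variable (hb : Function.Bijective (lpoly f x)) (σ δ : R → R)
variable (hσadd : ∀ a b : R, σ (a + b) = σ a + σ b) (hδadd : ∀ a b : R, δ (a + b) = δ a + δ b)
variable (hσ1 : σ 1 = 1) (hδ1 : δ 1 = 0)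
variable (hanti : ∀ r : R, σ (δ r) + δ (σ r) = 0)
variable (hmul : ∀ (r s : R) (m n : ℕ),
    (f r * pw x m) * (f s * pw x n)
      = ∑ i ∈ Finset.range (m + 1),
          f (if Even n then r * pimap σ δ i m s else pimap σ δ i m s * r) * pw x (i + n))

lemma mem_supp_le (q : S) (n : ℕ) (hdeg : ∀ k, n < k → cf f x hb q k = 0)
    (j : ℕ) (hj : j ∈ ((EE f x hb).symm q).support) : j ≤ n := by
  by_contra h
  exact (Finsupp.mem_support_iff.1 hj) (hdeg j (by omega))

include hmul in
lemma smulL_eq (r : R) (q : S) :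
    f r * q = ∑ j ∈ ((EE f x hb).symm q).support,
      f (if Even j then r * cf f x hb q j else cf f x hb q j * r) * pw x j := by
  conv_lhs => rw [decomp f x hb q]
  rw [Finset.mul_sum]
  refine Finset.sum_congr rfl fun j _ => ?_
  have h1 : f r = f r * pw x 0 := (mul_one _).symm
  conv_lhs => rw [h1]
  rw [hmul r _ 0 j, Finset.sum_range_one]
  have h2 : pimap σ δ 0 0 (cf f x hb q j) = cf f x hb q j := rfl
  rw [h2, Nat.zero_add]

include hmul in
lemma cf_smulL (r : R) (q : S) (k : ℕ) :
    cf f x hb (f r * q) k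
      = if Even k then r * cf f x hb q k else cf f x hb q k * r := by
  rw [smulL_eq f x hb σ δ hmul r q,
    cf_monos f x hb _ (fun j => if Even j then r * cf f x hb q j else cf f x hb q j * r)
      (fun j => j) k]
  rw [Finset.sum_ite_eq' _ k]
  by_cases h : k ∈ ((EE f x hb).symm q).support
  · rw [if_pos h]
  · rw [if_neg h]
    have h0 : cf f x hb q k = 0 := Finsupp.notMem_support_iff.1 h
    rw [h0, mul_zero, zero_mul, ite_self]

include hσadd hδadd hanti hmul in
lemma x2mul_eq (q : S) :
    pw x 2 * q = (∑ j ∈ ((EE f x hb).symm q).support, f (δ (δ (cf f x hb q j))) * pw x j)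
      + ∑ j ∈ ((EE f x hb).symm q).support, f (σ (σ (cf f x hb q j))) * pw x (j + 2) := by
  have h1 : pw x 2 = f 1 * pw x 2 := by rw [map_one, one_mul]
  conv_lhs => rw [h1, decomp f x hb q]
  rw [Finset.mul_sum, ← Finset.sum_add_distrib]
  refine Finset.sum_congr rfl fun j _ => ?_
  rw [hmul 1 _ 2 j]
  obtain ⟨h0, h1', h2⟩ := pimap_two σ δ hσadd hδadd hanti (cf f x hb q j)
  rw [Finset.sum_range_succ, Finset.sum_range_succ, Finset.sum_range_one, h0, h1', h2]
  have e0 : (if Even j then (1:R) * δ (δ (cf f x hb q j)) else δ (δ (cf f x hb q j)) * 1)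
      = δ (δ (cf f x hb q j)) := by
    by_cases h : Even j
    · rw [if_pos h, one_mul]
    · rw [if_neg h, mul_one]
  have e1 : (if Even j then (1:R) * (0:R) else (0:R) * 1) = 0 := by
    by_cases h : Even j
    · rw [if_pos h, one_mul]
    · rw [if_neg h, zero_mul]
  have e2 : (if Even j then (1:R) * σ (σ (cf f x hb q j)) else σ (σ (cf f x hb q j)) * 1)
      = σ (σ (cf f x hb q j)) := by
    by_cases h : Even j
    · rw [if_pos h, one_mul]
    · rw [if_neg h, mul_one]
  rw [e0, e1, e2, map_zero, zero_mul, add_zero, Nat.zero_add, Nat.add_comm 2 j]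

include hσadd hδadd hanti hmul in
lemma cf_x2mul (q : S) (k : ℕ) :
    cf f x hb (pw x 2 * q) (k + 2)
      = δ (δ (cf f x hb q (k + 2))) + σ (σ (cf f x hb q k)) := by
  rw [x2mul_eq f x hb σ δ hσadd hδadd hanti hmul q, cf_add,
    cf_monos f x hb _ (fun j => δ (δ (cf f x hb q j))) (fun j => j) (k+2),
    cf_monos f x hb _ (fun j => σ (σ (cf f x hb q j))) (fun j => j + 2) (k+2)]
  have hs1 : ∑ j ∈ ((EE f x hb).symm q).support,
      (if j = k + 2 then δ (δ (cf f x hb q j)) else 0) = δ (δ (cf f x hb q (k+2))) := by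
    rw [Finset.sum_ite_eq' _ (k+2)]
    by_cases h : k + 2 ∈ ((EE f x hb).symm q).support
    · rw [if_pos h]
    · have h0 : cf f x hb q (k+2) = 0 := Finsupp.notMem_support_iff.1 h
      rw [if_neg h, h0, del_zero δ hδadd, del_zero δ hδadd]
  have hs2 : ∑ j ∈ ((EE f x hb).symm q).support,
      (if j + 2 = k + 2 then σ (σ (cf f x hb q j)) else 0) = σ (σ (cf f x hb q k)) := by
    have : ∀ j, (j + 2 = k + 2) = (j = k) := by intro j; simp
    simp only [this]
    rw [Finset.sum_ite_eq' _ k]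
    by_cases h : k ∈ ((EE f x hb).symm q).support
    · rw [if_pos h]
    · have h0 : cf f x hb q k = 0 := Finsupp.notMem_support_iff.1 h
      rw [if_neg h, h0, sig_zero σ hσadd, sig_zero σ hσadd]
  rw [hs1, hs2]

include hσadd hδadd hσ1 hδ1 hmul in
lemma mono_mul_x (s : R) (j : ℕ) : (f s * pw x j) * x = f s * pw x (j + 1) := by
  have hx : x = f 1 * pw x 1 := by
    rw [map_one, one_mul]
    show x = pw x 0 * x
    rw [show pw x 0 = (1:S) from rfl, one_mul]
  conv_lhs =>
    congr
    · skip
    · rw [hx]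
  rw [hmul s 1 j 1]
  have hc : ∀ i ∈ Finset.range (j+1),
      f (if Even 1 then s * pimap σ δ i j 1 else pimap σ δ i j 1 * s) * pw x (i + 1)
        = if i = j then f s * pw x (i + 1) else 0 := by
    intro i _
    rw [if_neg (by simp : ¬ Even 1), pimap_one σ δ hσadd hδadd hσ1 hδ1 j i]
    by_cases h : i = j
    · rw [if_pos h, if_pos h, one_mul]
    · rw [if_neg h, if_neg h, zero_mul, map_zero, zero_mul]
  rw [Finset.sum_congr rfl hc, Finset.sum_ite_eq' (Finset.range (j+1)) j,
    if_pos (Finset.self_mem_range_succ j)]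

include hσadd hδadd hσ1 hδ1 hmul in
lemma mulx_eq (q : S) :
    q * x = ∑ j ∈ ((EE f x hb).symm q).support, f (cf f x hb q j) * pw x (j + 1) := by
  conv_lhs => rw [decomp f x hb q]
  rw [Finset.sum_mul]
  exact Finset.sum_congr rfl fun j _ =>
    mono_mul_x f x σ δ hσadd hδadd hσ1 hδ1 hmul (cf f x hb q j) j

include hσadd hδadd hσ1 hδ1 hmul in
lemma cf_mulx_succ (q : S) (k : ℕ) : cf f x hb (q * x) (k + 1) = cf f x hb q k := by
  rw [mulx_eq f x hb σ δ hσadd hδadd hσ1 hδ1 hmul q,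
    cf_monos f x hb _ (fun j => cf f x hb q j) (fun j => j + 1) (k+1)]
  have : ∀ j, (j + 1 = k + 1) = (j = k) := by intro j; simp
  simp only [this]
  rw [Finset.sum_ite_eq' _ k]
  by_cases h : k ∈ ((EE f x hb).symm q).support
  · rw [if_pos h]
  · have h0 : cf f x hb q k = 0 := Finsupp.notMem_support_iff.1 h
    rw [if_neg h, h0]

include hσadd hδadd hσ1 hδ1 hmul in
lemma cf_mulx_zero (q : S) : cf f x hb (q * x) 0 = 0 := by
  rw [mulx_eq f x hb σ δ hσadd hδadd hσ1 hδ1 hmul q,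
    cf_monos f x hb _ (fun j => cf f x hb q j) (fun j => j + 1) 0]
  exact Finset.sum_eq_zero fun j _ => by rw [if_neg (by omega)]

include hmul in
lemma mul_fr_eq (q : S) (r : R) :
    q * f r = ∑ j ∈ ((EE f x hb).symm q).support,
      ∑ i ∈ Finset.range (j + 1), f (cf f x hb q j * pimap σ δ i j r) * pw x i := by
  have h1 : f r = f r * pw x 0 := (mul_one _).symm
  conv_lhs => rw [decomp f x hb q, h1]
  rw [Finset.sum_mul]
  refine Finset.sum_congr rfl fun j _ => ?_
  rw [hmul _ r j 0]
  refine Finset.sum_congr rfl fun i _ => ?_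
  rw [if_pos (Even.zero), Nat.add_zero]

include hσadd hδadd hmul in
lemma cf_mul_fr (q : S) (r : R) (n : ℕ) (hdeg : ∀ k, n < k → cf f x hb q k = 0) :
    (∀ k, n < k → cf f x hb (q * f r) k = 0)
      ∧ cf f x hb (q * f r) n = cf f x hb q n * σ^[n] r := by
  constructor
  · intro k hk
    rw [mul_fr_eq f x hb σ δ hmul q r, cf_sum]
    refine Finset.sum_eq_zero fun j hj => ?_
    rw [cf_monos f x hb _ (fun i => cf f x hb q j * pimap σ δ i j r) (fun i => i) k]
    refine Finset.sum_eq_zero fun i hi => ?_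
    have hjn : j ≤ n := mem_supp_le f x hb q n hdeg j hj
    have : i ≤ j := Nat.lt_succ_iff.1 (Finset.mem_range.1 hi)
    rw [if_neg (by omega)]
  · rw [mul_fr_eq f x hb σ δ hmul q r, cf_sum]
    have hc : ∀ j ∈ ((EE f x hb).symm q).support,
        cf f x hb (∑ i ∈ Finset.range (j + 1),
          f (cf f x hb q j * pimap σ δ i j r) * pw x i) n
          = if j = n then cf f x hb q n * σ^[n] r else 0 := by
      intro j hj
      rw [cf_monos f x hb _ (fun i => cf f x hb q j * pimap σ δ i j r) (fun i => i) n,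
        Finset.sum_ite_eq' (Finset.range (j+1)) n]
      by_cases h : j = n
      · subst h
        rw [if_pos (Finset.self_mem_range_succ j), if_pos rfl,
          pimap_diag σ δ hσadd hδadd j r]
      · have hjn : j ≤ n := mem_supp_le f x hb q n hdeg j hj
        rw [if_neg (by simp; omega), if_neg h]
    rw [Finset.sum_congr rfl hc, Finset.sum_ite_eq' _ n]
    by_cases h : n ∈ ((EE f x hb).symm q).support
    · rw [if_pos h]
    · have h0 : cf f x hb q n = 0 := Finsupp.notMem_support_iff.1 h
      rw [if_neg h, h0, zero_mul]

end Prod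
/-! ## More helpers -/

section Helpers

variable {R S : Type*} [NonAssocRing R] [NonAssocRing S] (f : R →+* S) (x : S)
variable (hb : Function.Bijective (lpoly f x)) (σ δ : R → R)
variable (hσadd : ∀ a b : R, σ (a + b) = σ a + σ b) (hδadd : ∀ a b : R, δ (a + b) = δ a + δ b)
variable (hσ1 : σ 1 = 1) (hδ1 : δ 1 = 0)
variable (hanti : ∀ r : R, σ (δ r) + δ (σ r) = 0)
variable (hmul : ∀ (r s : R) (m n : ℕ),
    (f r * pw x m) * (f s * pw x n)
      = ∑ i ∈ Finset.range (m + 1),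
          f (if Even n then r * pimap σ δ i m s else pimap σ δ i m s * r) * pw x (i + n))

lemma cf_neg (q : S) (k : ℕ) : cf f x hb (-q) k = - cf f x hb q k := by
  unfold cf; rw [map_neg]; rfl

lemma eq_zero_of_cf_zero (q : S) (h : ∀ k, cf f x hb q k = 0) : q = 0 := by
  have hc : (EE f x hb).symm q = 0 := by ext k; exact h k
  have := congrArg (EE f x hb) hc
  rw [(EE f x hb).apply_symm_apply, map_zero] at this
  exact this

include hσadd in
lemma s2it_neg (k : ℕ) (a : R) : (σ ∘ σ)^[k] (-a) = - (σ ∘ σ)^[k] a := by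
  have h := s2it_add σ hσadd k a (-a)
  rw [add_neg_cancel, s2it_zero σ hσadd] at h
  exact eq_neg_of_add_eq_zero_right h.symm

include hσadd hδadd hanti hmul in
lemma x2_shift (q : S) (n : ℕ) (hbd : ∀ k, n < k → cf f x hb q k = 0) :
    (∀ k, n + 2 < k → cf f x hb (pw x 2 * q) k = 0)
      ∧ cf f x hb (pw x 2 * q) (n + 2) = (σ ∘ σ) (cf f x hb q n) := by
  constructor
  · intro k hk
    obtain ⟨k', rfl⟩ : ∃ k', k = k' + 2 := ⟨k - 2, by omega⟩
    rw [cf_x2mul f x hb σ δ hσadd hδadd hanti hmul q k', hbd (k' + 2) (by omega),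
      hbd k' (by omega), del_zero δ hδadd, del_zero δ hδadd, sig_zero σ hσadd,
      sig_zero σ hσadd, add_zero]
  · rw [cf_x2mul f x hb σ δ hσadd hδadd hanti hmul q n, hbd (n + 2) (by omega),
      del_zero δ hδadd, del_zero δ hδadd, zero_add]
    rfl

include hσadd hδadd hσ1 hδ1 hmul in
lemma x_shift (q : S) (n : ℕ) (hbd : ∀ k, n < k → cf f x hb q k = 0) :
    (∀ k, n + 1 < k → cf f x hb (q * x) k = 0)
      ∧ cf f x hb (q * x) (n + 1) = cf f x hb q n := by
  constructor
  · intro k hk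
    obtain ⟨k', rfl⟩ : ∃ k', k = k' + 1 := ⟨k - 1, by omega⟩
    rw [cf_mulx_succ f x hb σ δ hσadd hδadd hσ1 hδ1 hmul q k']
    exact hbd k' (by omega)
  · exact cf_mulx_succ f x hb σ δ hσadd hδadd hσ1 hδ1 hmul q n

end Helpers

/-! ## mun -/

section Mun

variable {R : Type*} [NonAssocRing R]

def mun : ℕ → R → R → R := fun n a t => if Even n then t * a else a * t

lemma mun_add_two (n : ℕ) : (mun (n + 2) : R → R → R) = mun n := by
  funext a t
  unfold mun
  have : Even (n + 2) ↔ Even n := by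
    constructor
    · intro h; rcases h with ⟨m, hm⟩; exact ⟨m - 1, by omega⟩
    · intro h; rcases h with ⟨m, hm⟩; exact ⟨m + 1, by omega⟩
  by_cases h : Even n
  · rw [if_pos h, if_pos (this.2 h)]
  · rw [if_neg h, if_neg (fun hc => h (this.1 hc))]

lemma mun_add_two_mul (n k : ℕ) : (mun (n + 2 * k) : R → R → R) = mun n := by
  induction k with
  | zero => rfl
  | succ k ih =>
    have : n + 2 * (k + 1) = (n + 2 * k) + 2 := by omega
    rw [this, mun_add_two, ih]

end Mun

section Bridge

variable {T : Type*} [NonAssocRing T]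

lemma left_bridge (I : Set T) : IsLeftIdeal T I ↔ GIdl (fun a t => t * a) I := Iff.rfl

lemma right_bridge (I : Set T) : IsRightIdeal T I ↔ GIdl (fun a t => a * t) I := Iff.rfl

lemma lgen_bridge (G : Set T) : lIdealGen T G = GGen (fun a t => t * a) G := rfl

lemma rgen_bridge (G : Set T) : rIdealGen T G = GGen (fun a t => a * t) G := rfl

end Bridge

/-! ## Coefficient sets and witnesses -/

section CSetSec

variable {R S : Type*} [NonAssocRing R] [NonAssocRing S] (f : R →+* S) (x : S)
variable (hb : Function.Bijective (lpoly f x))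

def CSet (I : Set S) (n : ℕ) : Set R :=
  {s | ∃ q, q ∈ I ∧ (∀ k, n < k → cf f x hb q k = 0) ∧ cf f x hb q n = s}

noncomputable def witC (I : Set S) (n : ℕ) (g : R) : S :=
  if h : g ∈ CSet f x hb I n then h.choose else 0

lemma witC_spec (I : Set S) (n : ℕ) (g : R) (h : g ∈ CSet f x hb I n) :
    witC f x hb I n g ∈ I ∧ (∀ k, n < k → cf f x hb (witC f x hb I n g) k = 0)
      ∧ cf f x hb (witC f x hb I n g) n = g := by
  have he : witC f x hb I n g = h.choose := dif_pos h
  rw [he]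
  exact h.choose_spec

end CSetSec
/-! ## Main left theorem -/

section MainLeft

variable {R S : Type*} [NonAssocRing R] [NonAssocRing S] (f : R →+* S) (x : S)
variable (hb : Function.Bijective (lpoly f x)) (σ δ : R → R)
variable (hσadd : ∀ a b : R, σ (a + b) = σ a + σ b) (hδadd : ∀ a b : R, δ (a + b) = δ a + δ b)
variable (hσ1 : σ 1 = 1) (hδ1 : δ 1 = 0)
variable (hσ2bij : Function.Bijective (σ ∘ σ))
variable (hσ2mul : ∀ a b : R, (σ ∘ σ) (a * b) = (σ ∘ σ) a * (σ ∘ σ) b)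
variable (hanti : ∀ r : R, σ (δ r) + δ (σ r) = 0)
variable (hmul : ∀ (r s : R) (m n : ℕ),
    (f r * pw x m) * (f s * pw x n)
      = ∑ i ∈ Finset.range (m + 1),
          f (if Even n then r * pimap σ δ i m s else pimap σ δ i m s * r) * pw x (i + n))

include f x hb σ δ hσadd hδadd hσ1 hδ1 hσ2bij hσ2mul hanti hmul in
theorem main_left (hLN : LeftNoeth R) (hRN : RightNoeth R) : LeftNoeth S := by
  intro I hI
  have hIg : GIdl (fun (a t : S) => t * a) I := hI
  -- basic facts about the coefficient sets
  have hLI : ∀ n, GIdl (mun n) (CSet f x hb I n) := by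
    intro n
    refine ⟨⟨0, hI.1, fun k _ => cf_zero f x hb k, cf_zero f x hb n⟩, ?_, ?_, ?_⟩
    · rintro a b ⟨q, hq, hqb, hqv⟩ ⟨q', hq', hqb', hqv'⟩
      exact ⟨q + q', hI.2.1 q q' hq hq',
        fun k hk => by rw [cf_add, hqb k hk, hqb' k hk, add_zero],
        by rw [cf_add, hqv, hqv']⟩
    · rintro a ⟨q, hq, hqb, hqv⟩
      exact ⟨-q, hI.2.2.1 q hq,
        fun k hk => by rw [cf_neg, hqb k hk, neg_zero],
        by rw [cf_neg, hqv]⟩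
    · rintro a t ⟨q, hq, hqb, hqv⟩
      refine ⟨f t * q, hI.2.2.2 q (f t) hq, ?_, ?_⟩
      · intro k hk
        rw [cf_smulL f x hb σ δ hmul t q k, hqb k hk, mul_zero, zero_mul, ite_self]
      · rw [cf_smulL f x hb σ δ hmul t q n, hqv]
        rfl
  have hup : ∀ n a, a ∈ CSet f x hb I n → (σ ∘ σ) a ∈ CSet f x hb I (n + 2) := by
    rintro n a ⟨q, hq, hqb, hqv⟩
    obtain ⟨hb2, hv2⟩ := x2_shift f x hb σ δ hσadd hδadd hanti hmul q n hqb
    exact ⟨pw x 2 * q, hI.2.2.2 q (pw x 2) hq, hb2, by rw [hv2, hqv]⟩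
  -- Noetherianity for each mun
  have hNn : ∀ n (J : Set R), GIdl (mun n) J → ∃ G : Finset R, J = GGen (mun n) ↑G := by
    intro n J hJ
    by_cases h : Even n
    · have he : (mun n : R → R → R) = fun a t => t * a := by
        funext a t; exact if_pos h
      rw [he] at hJ ⊢
      exact hLN J hJ
    · have he : (mun n : R → R → R) = fun a t => a * t := by
        funext a t; exact if_neg h
      rw [he] at hJ ⊢
      exact hRN J hJ
  -- ascending chains of twisted coefficient ideals stabilize
  have hCac : ∀ b : ℕ, ∃ K, ∀ k, K ≤ k →
      ((σ ∘ σ)^[k]) ⁻¹' (CSet f x hb I (b + 2*k))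
        = ((σ ∘ σ)^[K]) ⁻¹' (CSet f x hb I (b + 2*K)) := by
    intro b
    have hCI : ∀ k, GIdl (mun b) (((σ ∘ σ)^[k]) ⁻¹' (CSet f x hb I (b + 2*k))) := by
      intro k
      have h1 : GIdl (mun b) (CSet f x hb I (b + 2*k)) := by
        rw [← mun_add_two_mul b k]; exact hLI _
      refine gidl_preimage (s2it_add σ hσadd k) ?_ h1
      intro a t
      unfold mun
      by_cases h : Even b
      · rw [if_pos h, if_pos h]; exact s2it_mul σ hσ2mul k t a
      · rw [if_neg h, if_neg h]; exact s2it_mul σ hσ2mul k a t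
    have hmono : ∀ k, ((σ ∘ σ)^[k]) ⁻¹' (CSet f x hb I (b + 2*k))
        ⊆ ((σ ∘ σ)^[k+1]) ⁻¹' (CSet f x hb I (b + 2*(k+1))) := by
      intro k a ha
      have h2 := hup (b + 2*k) _ ha
      show (σ ∘ σ)^[k+1] a ∈ CSet f x hb I (b + 2*(k+1))
      rw [Function.iterate_succ_apply', show b + 2*(k+1) = (b + 2*k) + 2 from by omega]
      exact h2
    exact gidl_acc (hNn b) _ hmono hCI
  obtain ⟨K0, hK0⟩ := hCac 0
  obtain ⟨K1, hK1⟩ := hCac 1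
  have hs2surj : Function.Surjective (σ ∘ σ) := hσ2bij.2
  -- descent of coefficient ideals beyond the stable point
  have hdes : ∀ b K, (∀ k, K ≤ k →
      ((σ ∘ σ)^[k]) ⁻¹' (CSet f x hb I (b + 2*k))
        = ((σ ∘ σ)^[K]) ⁻¹' (CSet f x hb I (b + 2*K))) →
      ∀ k, K ≤ k → CSet f x hb I (b + 2*(k+1)) ⊆ (σ ∘ σ) '' (CSet f x hb I (b + 2*k)) := by
    intro b K hst k hk s hs
    obtain ⟨a, ha⟩ := (hs2surj.iterate (k+1)) s
    have h1 : a ∈ ((σ ∘ σ)^[k+1]) ⁻¹' (CSet f x hb I (b + 2*(k+1))) := by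
      simp only [Set.mem_preimage]
      rw [ha]; exact hs
    rw [hst (k+1) (by omega), ← hst k hk] at h1
    refine ⟨(σ ∘ σ)^[k] a, h1, ?_⟩
    rw [← Function.iterate_succ_apply' (σ ∘ σ) k a]
    exact ha
  set N : ℕ := 2 * max K0 K1 + 2 with hN
  have hLdesc : ∀ n, N ≤ n → CSet f x hb I (n + 2) ⊆ (σ ∘ σ) '' (CSet f x hb I n) := by
    intro n hn
    rcases Nat.even_or_odd n with ⟨m, hm⟩ | ⟨m, hm⟩
    · have hK : K0 ≤ max K0 K1 := le_max_left _ _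
      have h := hdes 0 K0 hK0 m (by omega)
      rw [show 0 + 2*(m+1) = n + 2 from by omega, show 0 + 2*m = n from by omega] at h
      exact h
    · have hK : K1 ≤ max K0 K1 := le_max_right _ _
      have h := hdes 1 K1 hK1 m (by omega)
      rw [show 1 + 2*(m+1) = n + 2 from by omega, show 1 + 2*m = n from by omega] at h
      exact h
  have hrep : ∀ n, ∃ n' k, n' ≤ N + 1 ∧ n = n' + 2 * k
      ∧ CSet f x hb I n ⊆ ((σ ∘ σ)^[k]) '' (CSet f x hb I n') := by
    intro n
    induction n using Nat.strong_induction_on with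
    | _ n ih =>
      by_cases h : n ≤ N + 1
      · exact ⟨n, 0, h, by omega, fun s hs => ⟨s, hs, rfl⟩⟩
      · obtain ⟨n2, rfl⟩ : ∃ n2, n = n2 + 2 := ⟨n - 2, by omega⟩
        obtain ⟨n', k, hn', heq, hsub⟩ := ih n2 (by omega)
        refine ⟨n', k + 1, hn', by omega, ?_⟩
        intro s hs
        obtain ⟨a, ha, rfl⟩ := hLdesc n2 (by omega) hs
        obtain ⟨t, ht, rfl⟩ := hsub ha
        exact ⟨t, ht, Function.iterate_succ_apply' (σ ∘ σ) k t⟩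
  -- generators
  have hGex : ∀ n, ∃ G : Finset R, ↑G ⊆ CSet f x hb I n
      ∧ ∀ W, GIdl (mun n) W → ↑G ⊆ W → CSet f x hb I n ⊆ W := by
    intro n
    obtain ⟨G, hG⟩ := hNn n (CSet f x hb I n) (hLI n)
    refine ⟨G, ?_, ?_⟩
    · rw [hG]; exact subset_gGen _
    · intro W hW hGW; rw [hG]; exact gGen_subset hW hGW
  choose Gn hGnsub hGnmin using hGex
  classical
  refine ⟨(Finset.range (N+2)).biUnion
    (fun n => (Gn n).image (witC f x hb I n)), ?_⟩
  set P : Finset S := (Finset.range (N+2)).biUnion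
    (fun n => (Gn n).image (witC f x hb I n)) with hP
  have hPI : ↑P ⊆ I := by
    intro q hq
    rw [hP] at hq
    simp only [Finset.coe_biUnion, Finset.mem_coe, Finset.mem_range, Set.mem_iUnion,
      Finset.mem_biUnion, Finset.mem_image] at hq
    obtain ⟨n, hn, g, hg, rfl⟩ := hq
    exact (witC_spec f x hb I n g (hGnsub n hg)).1
  have hPmem : ∀ n g, n ≤ N + 1 → g ∈ Gn n → witC f x hb I n g ∈ (↑P : Set S) := by
    intro n g hn hg
    rw [hP]
    simp only [Finset.coe_biUnion, Finset.mem_coe, Finset.mem_range, Set.mem_iUnion,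
      Finset.mem_biUnion, Finset.mem_image]
    exact ⟨n, by omega, g, hg, rfl⟩
  have hGenSI : GGen (fun (a t : S) => t * a) ↑P ⊆ I := gGen_subset hIg hPI
  set GenS : Set S := GGen (fun (a t : S) => t * a) ↑P with hGenS
  have hGenIdl : GIdl (fun (a t : S) => t * a) GenS := gidl_gGen _
  -- key realization lemma
  have hkey : ∀ n s, s ∈ CSet f x hb I n →
      ∃ u, u ∈ GenS ∧ (∀ k, n < k → cf f x hb u k = 0) ∧ cf f x hb u n = s := by
    intro n s hs
    obtain ⟨n', k, hn'le, heq, hsub⟩ := hrep n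
    subst heq
    obtain ⟨t, ht, rfl⟩ := hsub hs
    have hpar : Even (n' + 2*k) ↔ Even n' := by
      constructor
      · rintro ⟨m, hm⟩; exact ⟨m - k, by omega⟩
      · rintro ⟨m, hm⟩; exact ⟨m + k, by omega⟩
    set W : Set R := {a | ∃ u, u ∈ GenS ∧ (∀ k', n' + 2*k < k' → cf f x hb u k' = 0)
      ∧ cf f x hb u (n' + 2*k) = (σ ∘ σ)^[k] a} with hW
    have hWI : GIdl (mun n') W := by
      refine ⟨⟨0, hGenIdl.1, fun k' _ => cf_zero f x hb k',
          by rw [cf_zero, s2it_zero σ hσadd]⟩, ?_, ?_, ?_⟩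
      · rintro a b ⟨u, hu, hub, huv⟩ ⟨u', hu', hub', huv'⟩
        exact ⟨u + u', hGenIdl.2.1 u u' hu hu',
          fun k' hk' => by rw [cf_add, hub k' hk', hub' k' hk', add_zero],
          by rw [cf_add, huv, huv', s2it_add σ hσadd]⟩
      · rintro a ⟨u, hu, hub, huv⟩
        exact ⟨-u, hGenIdl.2.2.1 u hu,
          fun k' hk' => by rw [cf_neg, hub k' hk', neg_zero],
          by rw [cf_neg, huv, s2it_neg σ hσadd]⟩
      · rintro a r ⟨u, hu, hub, huv⟩
        refine ⟨f ((σ ∘ σ)^[k] r) * u,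
          hGenIdl.2.2.2 u (f ((σ ∘ σ)^[k] r)) hu, ?_, ?_⟩
        · intro k' hk'
          rw [cf_smulL f x hb σ δ hmul _ u k', hub k' hk', mul_zero, zero_mul, ite_self]
        · rw [cf_smulL f x hb σ δ hmul _ u (n' + 2*k), huv]
          unfold mun
          by_cases h : Even n'
          · rw [if_pos (hpar.2 h), if_pos h, ← s2it_mul σ hσ2mul k]
          · rw [if_neg (fun hc => h (hpar.1 hc)), if_neg h, ← s2it_mul σ hσ2mul k]
    have hGW : ↑(Gn n') ⊆ W := by
      intro g hg
      have hgL : g ∈ CSet f x hb I n' := hGnsub n' hg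
      obtain ⟨hq1, hq2, hq3⟩ := witC_spec f x hb I n' g hgL
      have it : ∀ j, ∃ u, u ∈ GenS ∧ (∀ k', n' + 2*j < k' → cf f x hb u k' = 0)
          ∧ cf f x hb u (n' + 2*j) = (σ ∘ σ)^[j] g := by
        intro j
        induction j with
        | zero =>
          refine ⟨witC f x hb I n' g, subset_gGen _ (hPmem n' g hn'le hg), ?_, hq3⟩
          exact hq2
        | succ j ihj =>
          obtain ⟨u, hu1, hu2, hu3⟩ := ihj
          obtain ⟨hb2, hv2⟩ := x2_shift f x hb σ δ hσadd hδadd hanti hmul u (n' + 2*j) hu2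
          refine ⟨pw x 2 * u, hGenIdl.2.2.2 u (pw x 2) hu1, ?_, ?_⟩
          · rw [show n' + 2*(j+1) = n' + 2*j + 2 from by omega]
            exact hb2
          · rw [show n' + 2*(j+1) = n' + 2*j + 2 from by omega, hv2, hu3]
            exact (Function.iterate_succ_apply' (σ ∘ σ) j g).symm
      exact it k
    exact hGnmin n' W hWI hGW ht
  -- descent
  have hdesc : ∀ n q, q ∈ I → (∀ k, n ≤ k → cf f x hb q k = 0) → q ∈ GenS := by
    intro n
    induction n with
    | zero =>
      intro q hq hqb
      have : q = 0 := eq_zero_of_cf_zero f x hb q (fun k => hqb k (by omega))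
      rw [this]
      exact hGenIdl.1
    | succ n ih =>
      intro q hq hqb
      have hsL : cf f x hb q n ∈ CSet f x hb I n := ⟨q, hq, fun k hk => hqb k (by omega), rfl⟩
      obtain ⟨u, hu1, hu2, hu3⟩ := hkey n _ hsL
      have hqu : q - u ∈ I := by
        rw [sub_eq_add_neg]
        exact hI.2.1 q (-u) hq (hI.2.2.1 u (hGenSI hu1))
      have hqub : ∀ k, n ≤ k → cf f x hb (q - u) k = 0 := by
        intro k hk
        rcases Nat.eq_or_lt_of_le hk with rfl | hlt
        · rw [cf_sub, hu3, sub_self]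
        · rw [cf_sub, hqb k (by omega), hu2 k hlt, sub_zero]
      have := ih (q - u) hqu hqub
      have hfin : q - u + u ∈ GenS := hGenIdl.2.1 _ u this hu1
      rw [sub_add_cancel] at hfin
      exact hfin
  -- conclusion
  have hsub1 : I ⊆ GenS := by
    intro q hq
    obtain ⟨n, hn⟩ := exists_deg_lt f x hb q
    exact hdesc n q hq ((deg_lt_iff f x hb q n).1 hn)
  rw [lgen_bridge]
  exact Set.eq_of_subset_of_subset hsub1 hGenSI

end MainLeft
/-! ## Main right theorem -/

section MainRight

variable {R S : Type*} [NonAssocRing R] [NonAssocRing S] (f : R →+* S) (x : S)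
variable (hb : Function.Bijective (lpoly f x)) (σ δ : R → R)
variable (hσadd : ∀ a b : R, σ (a + b) = σ a + σ b) (hδadd : ∀ a b : R, δ (a + b) = δ a + δ b)
variable (hσ1 : σ 1 = 1) (hδ1 : δ 1 = 0)
variable (hσ2bij : Function.Bijective (σ ∘ σ))
variable (hmul : ∀ (r s : R) (m n : ℕ),
    (f r * pw x m) * (f s * pw x n)
      = ∑ i ∈ Finset.range (m + 1),
          f (if Even n then r * pimap σ δ i m s else pimap σ δ i m s * r) * pw x (i + n))

include f x hb σ δ hσadd hδadd hσ1 hδ1 hσ2bij hmul in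
theorem main_right (hRN : RightNoeth R) : RightNoeth S := by
  intro J hJ
  have hJg : GIdl (fun (a t : S) => a * t) J := hJ
  have hσsurj : Function.Surjective σ := (sig_bij σ hσ2bij).surjective
  have hNr : ∀ (J' : Set R), GIdl (fun (a t : R) => a * t) J'
      → ∃ G : Finset R, J' = GGen (fun (a t : R) => a * t) ↑G := fun J' hJ' => hRN J' hJ'
  -- coefficient sets are right ideals
  have hAI : ∀ n, GIdl (fun (a t : R) => a * t) (CSet f x hb J n) := by
    intro n
    refine ⟨⟨0, hJ.1, fun k _ => cf_zero f x hb k, cf_zero f x hb n⟩, ?_, ?_, ?_⟩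
    · rintro a b ⟨q, hq, hqb, hqv⟩ ⟨q', hq', hqb', hqv'⟩
      exact ⟨q + q', hJ.2.1 q q' hq hq',
        fun k hk => by rw [cf_add, hqb k hk, hqb' k hk, add_zero],
        by rw [cf_add, hqv, hqv']⟩
    · rintro a ⟨q, hq, hqb, hqv⟩
      exact ⟨-q, hJ.2.2.1 q hq,
        fun k hk => by rw [cf_neg, hqb k hk, neg_zero],
        by rw [cf_neg, hqv]⟩
    · rintro a r' ⟨q, hq, hqb, hqv⟩
      obtain ⟨r, hr⟩ := (hσsurj.iterate n) r'
      obtain ⟨hbd, hval⟩ := cf_mul_fr f x hb σ δ hσadd hδadd hmul q r n hqb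
      exact ⟨q * f r, hJ.2.2.2 q (f r) hq, hbd, by rw [hval, hqv, hr]⟩
  -- monotone chain
  have hmono : ∀ n, CSet f x hb J n ⊆ CSet f x hb J (n + 1) := by
    rintro n s ⟨q, hq, hqb, hqv⟩
    obtain ⟨hbd, hval⟩ := x_shift f x hb σ δ hσadd hδadd hσ1 hδ1 hmul q n hqb
    exact ⟨q * x, hJ.2.2.2 q x hq, hbd, by rw [hval, hqv]⟩
  obtain ⟨K, hK⟩ := gidl_acc hNr (fun n => CSet f x hb J n) hmono hAI
  -- generators
  have hGex : ∀ n, ∃ G : Finset R, ↑G ⊆ CSet f x hb J n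
      ∧ ∀ W, GIdl (fun (a t : R) => a * t) W → ↑G ⊆ W → CSet f x hb J n ⊆ W := by
    intro n
    obtain ⟨G, hG⟩ := hNr (CSet f x hb J n) (hAI n)
    refine ⟨G, ?_, ?_⟩
    · rw [hG]; exact subset_gGen _
    · intro W hW hGW; rw [hG]; exact gGen_subset hW hGW
  choose Gn hGnsub hGnmin using hGex
  classical
  refine ⟨(Finset.range (K+1)).biUnion
    (fun n => (Gn n).image (witC f x hb J n)), ?_⟩
  set P : Finset S := (Finset.range (K+1)).biUnion
    (fun n => (Gn n).image (witC f x hb J n)) with hP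
  have hPJ : ↑P ⊆ J := by
    intro q hq
    rw [hP] at hq
    simp only [Finset.coe_biUnion, Finset.mem_coe, Finset.mem_range, Set.mem_iUnion,
      Finset.mem_biUnion, Finset.mem_image] at hq
    obtain ⟨n, hn, g, hg, rfl⟩ := hq
    exact (witC_spec f x hb J n g (hGnsub n hg)).1
  have hPmem : ∀ n g, n ≤ K → g ∈ Gn n → witC f x hb J n g ∈ (↑P : Set S) := by
    intro n g hn hg
    rw [hP]
    simp only [Finset.coe_biUnion, Finset.mem_coe, Finset.mem_range, Set.mem_iUnion,
      Finset.mem_biUnion, Finset.mem_image]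
    exact ⟨n, by omega, g, hg, rfl⟩
  have hGenSJ : GGen (fun (a t : S) => a * t) ↑P ⊆ J := gGen_subset hJg hPJ
  set GenS : Set S := GGen (fun (a t : S) => a * t) ↑P with hGenS
  have hGenIdl : GIdl (fun (a t : S) => a * t) GenS := gidl_gGen _
  -- key realization lemma
  have hkey : ∀ n s, s ∈ CSet f x hb J n →
      ∃ u, u ∈ GenS ∧ (∀ k, n < k → cf f x hb u k = 0) ∧ cf f x hb u n = s := by
    intro n s hs
    set n0 : ℕ := min n K with hn0
    have hn0n : n0 ≤ n := min_le_left _ _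
    have hn0K : n0 ≤ K := min_le_right _ _
    have hs' : s ∈ CSet f x hb J n0 := by
      rcases Nat.lt_or_ge K n with h | h
      · have h1 : n0 = K := by omega
        have h2 := hK n (by omega)
        rw [h1]
        rw [h2] at hs
        exact hs
      · have : n0 = n := by omega
        rw [this]; exact hs
    set W : Set R := {a | ∃ u, u ∈ GenS ∧ (∀ k', n < k' → cf f x hb u k' = 0)
      ∧ cf f x hb u n = a} with hW
    have hWI : GIdl (fun (a t : R) => a * t) W := by
      refine ⟨⟨0, hGenIdl.1, fun k' _ => cf_zero f x hb k', cf_zero f x hb n⟩, ?_, ?_, ?_⟩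
      · rintro a b ⟨u, hu, hub, huv⟩ ⟨u', hu', hub', huv'⟩
        exact ⟨u + u', hGenIdl.2.1 u u' hu hu',
          fun k' hk' => by rw [cf_add, hub k' hk', hub' k' hk', add_zero],
          by rw [cf_add, huv, huv']⟩
      · rintro a ⟨u, hu, hub, huv⟩
        exact ⟨-u, hGenIdl.2.2.1 u hu,
          fun k' hk' => by rw [cf_neg, hub k' hk', neg_zero],
          by rw [cf_neg, huv]⟩
      · rintro a r' ⟨u, hu, hub, huv⟩
        obtain ⟨r, hr⟩ := (hσsurj.iterate n) r'
        obtain ⟨hbd, hval⟩ := cf_mul_fr f x hb σ δ hσadd hδadd hmul u r n hub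
        exact ⟨u * f r, hGenIdl.2.2.2 u (f r) hu, hbd, by rw [hval, huv, hr]⟩
    have hGW : ↑(Gn n0) ⊆ W := by
      intro g hg
      have hgL : g ∈ CSet f x hb J n0 := hGnsub n0 hg
      obtain ⟨hq1, hq2, hq3⟩ := witC_spec f x hb J n0 g hgL
      have it : ∀ j, ∃ u, u ∈ GenS ∧ (∀ k', n0 + j < k' → cf f x hb u k' = 0)
          ∧ cf f x hb u (n0 + j) = g := by
        intro j
        induction j with
        | zero =>
          refine ⟨witC f x hb J n0 g, subset_gGen _ (hPmem n0 g hn0K hg), ?_, ?_⟩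
          · intro k' hk'; exact hq2 k' (by omega)
          · rw [Nat.add_zero]; exact hq3
        | succ j ihj =>
          obtain ⟨u, hu1, hu2, hu3⟩ := ihj
          obtain ⟨hbd, hval⟩ := x_shift f x hb σ δ hσadd hδadd hσ1 hδ1 hmul u (n0 + j) hu2
          refine ⟨u * x, hGenIdl.2.2.2 u x hu1, ?_, ?_⟩
          · rw [show n0 + (j+1) = n0 + j + 1 from by omega]
            exact hbd
          · rw [show n0 + (j+1) = n0 + j + 1 from by omega, hval, hu3]
      obtain ⟨u, hu1, hu2, hu3⟩ := it (n - n0)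
      rw [show n0 + (n - n0) = n from by omega] at hu2 hu3
      exact ⟨u, hu1, hu2, hu3⟩
    obtain ⟨u, hu1, hu2, hu3⟩ := hGnmin n0 W hWI hGW hs'
    exact ⟨u, hu1, hu2, hu3⟩
  -- descent
  have hdesc : ∀ n q, q ∈ J → (∀ k, n ≤ k → cf f x hb q k = 0) → q ∈ GenS := by
    intro n
    induction n with
    | zero =>
      intro q hq hqb
      have : q = 0 := eq_zero_of_cf_zero f x hb q (fun k => hqb k (by omega))
      rw [this]
      exact hGenIdl.1
    | succ n ih =>
      intro q hq hqb
      have hsL : cf f x hb q n ∈ CSet f x hb J n :=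
        ⟨q, hq, fun k hk => hqb k (by omega), rfl⟩
      obtain ⟨u, hu1, hu2, hu3⟩ := hkey n _ hsL
      have hqu : q - u ∈ J := by
        rw [sub_eq_add_neg]
        exact hJ.2.1 q (-u) hq (hJ.2.2.1 u (hGenSJ hu1))
      have hqub : ∀ k, n ≤ k → cf f x hb (q - u) k = 0 := by
        intro k hk
        rcases Nat.eq_or_lt_of_le hk with rfl | hlt
        · rw [cf_sub, hu3, sub_self]
        · rw [cf_sub, hqb k (by omega), hu2 k hlt, sub_zero]
      have := ih (q - u) hqu hqub
      have hfin : q - u + u ∈ GenS := hGenIdl.2.1 _ u this hu1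
      rw [sub_add_cancel] at hfin
      exact hfin
  have hsub1 : J ⊆ GenS := by
    intro q hq
    obtain ⟨n, hn⟩ := exists_deg_lt f x hb q
    exact hdesc n q hq ((deg_lt_iff f x hb q n).1 hn)
  rw [rgen_bridge]
  exact Set.eq_of_subset_of_subset hsub1 hGenSJ

end MainRight


/-- if `σ²` is an automorphism, `σ∘δ + δ∘σ = 0`, and `R` is Noetherian,
then `R[X;σ,δ]^fl` is Noetherian. -/
theorem stmt19 {R S : Type*} [NonAssocRing R] [NonAssocRing S] (f : R →+* S) (x : S) (σ δ : R → R)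
    (hσadd : ∀ a b : R, σ (a + b) = σ a + σ b) (hδadd : ∀ a b : R, δ (a + b) = δ a + δ b)
    (hσ1 : σ 1 = 1) (hδ1 : δ 1 = 0)
    (hσ2bij : Function.Bijective (σ ∘ σ))
    (hσ2mul : ∀ a b : R, (σ ∘ σ) (a * b) = (σ ∘ σ) a * (σ ∘ σ) b)
    (hanti : ∀ r : R, σ (δ r) + δ (σ r) = 0)
    (hpoly : IsFlipGPolyRing σ δ f x)
    (hLN : LeftNoeth R) (hRN : RightNoeth R) :
    LeftNoeth S ∧ RightNoeth S := by
  obtain ⟨hinj, hpa, hb, hmul⟩ := hpoly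
  exact ⟨main_left f x hb σ δ hσadd hδadd hσ1 hδ1 hσ2bij hσ2mul hanti hmul hLN hRN,
    main_right f x hb σ δ hσadd hδadd hσ1 hδ1 hσ2bij hmul hRN⟩
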